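/- Define ρ̃(a,b,c,d,e,f) to be the 2×2 real matrix with entries ρ̃₁₁ = (a−d+1)d + b(f−c), ρ̃₁₂ = cd − be + f, ρ̃₂₁ = c(d−1) − be, ρ̃₂₂ = −c² + fc + (a−d−1)e. Define U₁(r,s) = (1+rs², −s(1+rs²), rs, −rs², r, −rs), U₂(u,v) = (u,v,0,0,0,0), and U₃(u,v) = (u,v,0,1+u,0,0). Then { x ∈ ℝ⁶ : ρ̃(x) = 0 } = Range(U₁) ∪ Range(U₂) ∪ Range(U₃). -/

import Mathlib

open Matrix

/-- The space of Type B models: `(a,b,c,d,e,f)` records the Christoffel symbols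
`Γᵢⱼᵏ = Aᵢⱼᵏ / x¹`. -/
abbrev R6 : Type := ℝ × ℝ × ℝ × ℝ × ℝ × ℝ

/-- `(x¹)²` times the Ricci tensor of the Type B model `𝒩(a,b,c,d,e,f)`. -/
def ρB : R6 → Matrix (Fin 2) (Fin 2) ℝ
  | (a, b, c, d, e, f) =>
    !![(a-d+1)*d + b*(f-c), c*d - b*e + f;
       c*(d-1) - b*e, -c^2 + f*c + (a-d-1)*e]

def U1 : ℝ × ℝ → R6 := fun p =>
  (1 + p.1*p.2^2, -p.2*(1 + p.1*p.2^2), p.1*p.2, -p.1*p.2^2, p.1, -p.1*p.2)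

def U2 : ℝ × ℝ → R6 := fun p => (p.1, p.2, 0, 0, 0, 0)

def U3 : ℝ × ℝ → R6 := fun p => (p.1, p.2, 0, 1 + p.1, 0, 0)


/-!
Since `ρ̃₁₂ - ρ̃₂₁ = f + c`, flatness forces `f = -c`. If `e = 0`, then `ρ̃₂₂ = -2c²` kills `c`,
and `ρ̃₁₁ = (a - d + 1) d` leaves `d = 0` (the family `U₂`) or `d = 1 + a` (the family `U₃`).
If `e ≠ 0`, the remaining equations are linear in `a`, `b`, `d` and give
`d = -c²/e`, `b = c(d - 1)/e`, `a = d + 1 + 2c²/e`, which is `U₁(e, c/e)`.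
-/

lemma ρB_eq_zero_iff (a b c d e f : ℝ) :
    ρB (a, b, c, d, e, f) = 0 ↔
      (a - d + 1) * d + b * (f - c) = 0 ∧ c * d - b * e + f = 0 ∧
      c * (d - 1) - b * e = 0 ∧ -c ^ 2 + f * c + (a - d - 1) * e = 0 := by
  simp [ρB, ← Matrix.ext_iff, Fin.forall_fin_two, and_assoc]

lemma ρB_U1 (p : ℝ × ℝ) : ρB (U1 p) = 0 := by
  simp only [U1, ρB_eq_zero_iff]
  refine ⟨?_, ?_, ?_, ?_⟩ <;> ring

lemma ρB_U2 (p : ℝ × ℝ) : ρB (U2 p) = 0 := by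
  simp [U2, ρB_eq_zero_iff]

lemma ρB_U3 (p : ℝ × ℝ) : ρB (U3 p) = 0 := by
  simp only [U3, ρB_eq_zero_iff]
  refine ⟨?_, ?_, ?_, ?_⟩ <;> ring

lemma mem_range_U2_or_U3_of_ρB_eq_zero {a b c d f : ℝ} (h : ρB (a, b, c, d, 0, f) = 0) :
    (a, b, c, d, 0, f) ∈ Set.range U2 ∪ Set.range U3 := by
  obtain ⟨h11, h12, h21, h22⟩ := (ρB_eq_zero_iff ..).1 h
  have hf : f = -c := by linarith
  have hc : c = 0 := by nlinarith [sq_nonneg c]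
  subst hf hc
  have hd : (a - d + 1) * d = 0 := by linarith
  rcases mul_eq_zero.1 hd with hd | rfl
  · exact Or.inr ⟨(a, b), by simp [U3]; linarith⟩
  · exact Or.inl ⟨(a, b), by simp [U2]⟩

lemma U1_eq_of_ρB_eq_zero {a b c d e f : ℝ} (he : e ≠ 0) (h : ρB (a, b, c, d, e, f) = 0) :
    U1 (e, c / e) = (a, b, c, d, e, f) := by
  obtain ⟨h11, h12, h21, h22⟩ := (ρB_eq_zero_iff ..).1 h
  obtain rfl : f = -c := by linarith
  have hd : e * d = -c ^ 2 := by linear_combination (e * h11 - 2 * c * h21 - d * h22) / 2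
  have ha : (a - d - 1) * e = 2 * c ^ 2 := by linear_combination h22
  have hb : b * e = c * (d - 1) := by linear_combination -h21
  simp only [U1, Prod.mk.injEq]
  refine ⟨?_, ?_, ?_, ?_, trivial, ?_⟩ <;> field_simp
  · linear_combination -ha - hd
  · linear_combination -e * hb - c * hd
  · linear_combination -hd

theorem stmt_13 :
    {x : R6 | ρB x = 0} = Set.range U1 ∪ Set.range U2 ∪ Set.range U3 := by
  refine subset_antisymm ?_ ?_
  · rintro ⟨a, b, c, d, e, f⟩ h
    by_cases he : e = 0
    · subst he
      rw [Set.union_assoc]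
      exact Or.inr (mem_range_U2_or_U3_of_ρB_eq_zero h)
    · exact Or.inl (Or.inl ⟨_, U1_eq_of_ρB_eq_zero he h⟩)
  · rintro _ ((⟨p, rfl⟩ | ⟨p, rfl⟩) | ⟨p, rfl⟩)
    exacts [ρB_U1 p, ρB_U2 p, ρB_U3 p]
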